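/- Let ε₀ > 0 and let κ : (0, ε₀) → ℂ be any function such that for every ε ∈ (0, ε₀) one has (α₊+2κ(ε))(α₋+2κ(ε)) = α₊α₋·e^{-4κ(ε)ε}, Re κ(ε) > 0, and κ(ε) → κ₀ as ε → 0⁺. Then there exist ε₁ ∈ (0, ε₀] and C > 0 such that for all ε ∈ (0, ε₁): (∫_ℝ |f_{ε,κ(ε)}(x) - f₀(x)|² dx)^{1/2} ≤ C·ε and |∫_ℝ f_{ε,κ(ε)}(x)² dx - ∫_ℝ f₀(x)² dx| ≤ C·ε. -/

import Mathlib

open MeasureTheory Set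

/-- The eigenfunction `f_{ε,κ}` of the two-delta-interaction operator, in the
normalisation with unit coefficient on the left exponential. -/
noncomputable def fTwo (αm : ℂ) (ε : ℝ) (κ : ℂ) : ℝ → ℂ := fun x =>
  if x < -ε then Complex.exp (κ * x)
  else if x ≤ ε then
    (-(αm / (2 * κ)) * Complex.exp (-2 * κ * ε)) * Complex.exp (-κ * x) +
      ((αm + 2 * κ) / (2 * κ)) * Complex.exp (κ * x)
  else
    (Complex.exp (2 * κ * ε) +
        (αm / (2 * κ)) * (Complex.exp (2 * κ * ε) - Complex.exp (-2 * κ * ε))) *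
      Complex.exp (-κ * x)

/-! The eigenvalue equation is equivalent to `4κ(κ - κ₀) = α₊α₋(e^{-4κε} - 1)`, so
`κ(ε) - κ₀ = O(ε)` as soon as `κ(ε)` is close to `κ₀`. Comparing `f_{ε,κ}` with `e^{-κ|x|}`
(they agree left of `-ε`, differ by `O(ε)` on `[-ε, ε]`, and by an `O(ε)` multiple of `e^{-κx}`
right of `ε`) and `e^{-κ|x|}` with `f₀ = e^{-κ₀|x|}` gives the domination
`|f_{ε,κ(ε)} - f₀| ≤ A ε e^{-Re κ₀ |x| / 4}`. Both estimates follow by integrating it, the second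
through `f² - g² = (f - g)(f + g)`. -/

open Filter Topology
open scoped Complex Real

lemma norm_cexp_sub_cexp_le {a b : ℂ} (ha : ‖a‖ ≤ 1) (hb : ‖b‖ ≤ 1) :
    ‖cexp a - cexp b‖ ≤ 2 * (‖a‖ + ‖b‖) :=
  calc ‖cexp a - cexp b‖ = ‖(cexp a - 1) - (cexp b - 1)‖ := by ring_nf
    _ ≤ ‖cexp a - 1‖ + ‖cexp b - 1‖ := norm_sub_le _ _
    _ ≤ 2 * ‖a‖ + 2 * ‖b‖ :=
      add_le_add (Complex.norm_exp_sub_one_le ha) (Complex.norm_exp_sub_one_le hb)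
    _ = 2 * (‖a‖ + ‖b‖) := by ring

lemma norm_cexp_neg_mul_sub_le (k κ₀ : ℂ) {t : ℝ} (ht : 0 ≤ t) :
    ‖cexp (-(k * t)) - cexp (-(κ₀ * t))‖ ≤
      ‖k - κ₀‖ * t * rexp (-((κ₀.re - ‖k - κ₀‖) * t)) := by
  have hz : ‖-((k - κ₀) * t)‖ = ‖k - κ₀‖ * t := by
    rw [norm_neg, norm_mul, Complex.norm_real, Real.norm_of_nonneg ht]
  have h1 : ‖cexp (-((k - κ₀) * t)) - 1‖ ≤ ‖k - κ₀‖ * t * rexp (‖k - κ₀‖ * t) := by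
    simpa [hz] using Complex.norm_exp_sub_sum_le_norm_mul_exp (-((k - κ₀) * t)) 1
  calc ‖cexp (-(k * t)) - cexp (-(κ₀ * t))‖
        = ‖cexp (-(κ₀ * t))‖ * ‖cexp (-((k - κ₀) * t)) - 1‖ := by
          rw [← norm_mul, mul_sub, ← Complex.exp_add]; ring_nf
    _ ≤ rexp (-(κ₀.re * t)) * (‖k - κ₀‖ * t * rexp (‖k - κ₀‖ * t)) := by
          rw [Complex.norm_exp]; gcongr; simp
    _ = ‖k - κ₀‖ * t * rexp (-((κ₀.re - ‖k - κ₀‖) * t)) := by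
          rw [mul_left_comm, ← Real.exp_add]; ring_nf

lemma mul_exp_neg_two_mul_le {a : ℝ} (ha : 0 < a) (t : ℝ) :
    t * rexp (-(2 * a * t)) ≤ a⁻¹ * rexp (-(a * t)) := by
  have hat : a * t ≤ rexp (a * t) := (le_add_of_nonneg_right zero_le_one).trans
    (Real.add_one_le_exp _)
  calc t * rexp (-(2 * a * t)) = a⁻¹ * (a * t) * rexp (-(2 * a * t)) := by field_simp
    _ ≤ a⁻¹ * rexp (a * t) * rexp (-(2 * a * t)) := by gcongr
    _ = a⁻¹ * rexp (-(a * t)) := by rw [mul_assoc, ← Real.exp_add]; ring_nf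

lemma half_re_le_re_of_norm_sub_le {k κ₀ : ℂ} (hk : ‖k - κ₀‖ ≤ κ₀.re / 2) :
    κ₀.re / 2 ≤ k.re := by
  have := (abs_le.1 ((Complex.abs_re_le_norm (k - κ₀)).trans hk)).1
  rw [Complex.sub_re] at this
  linarith

lemma integrable_exp_neg_mul_abs {a : ℝ} (ha : 0 < a) :
    Integrable (fun x : ℝ => rexp (-(a * |x|))) := by
  rw [← integrableOn_univ, ← Iic_union_Ioi (a := 0)]
  refine IntegrableOn.union ?_ ?_
  · refine (integrableOn_exp_mul_Iic ha 0).congr_fun (fun x hx => ?_) measurableSet_Iic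
    simp [abs_of_nonpos (mem_Iic.1 hx)]
  · refine (integrableOn_exp_mul_Ioi (neg_neg_of_pos ha) 0).congr_fun (fun x hx => ?_)
      measurableSet_Ioi
    simp [abs_of_pos (mem_Ioi.1 hx)]

lemma integrable_exp_neg_mul_abs_sq {a : ℝ} (ha : 0 < a) :
    Integrable (fun x : ℝ => rexp (-(a * |x|)) ^ 2) :=
  (integrable_exp_neg_mul_abs (mul_pos two_pos ha)).congr <| Eventually.of_forall fun x => by
    simp only [← Real.exp_nat_mul]; ring_nf

lemma exists_Ioo_of_eventually_nhdsGT {p : ℝ → Prop} (h : ∀ᶠ ε in 𝓝[>] 0, p ε) {ε₀ : ℝ}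
    (hε₀ : 0 < ε₀) : ∃ ε₁, 0 < ε₁ ∧ ε₁ ≤ ε₀ ∧ ∀ ε ∈ Ioo 0 ε₁, p ε := by
  obtain ⟨δ, hδ, hsub⟩ := mem_nhdsGT_iff_exists_Ioo_subset.1 h
  exact ⟨min ε₀ δ, lt_min hε₀ hδ, min_le_left _ _,
    fun ε hε => hsub ⟨hε.1, hε.2.trans_le (min_le_right _ _)⟩⟩

section Domination

variable {α : Type*} [MeasurableSpace α] {μ : Measure α} {w : α → ℝ} {δ : ℝ}

lemma sqrt_integral_norm_sq_le {E : Type*} [NormedAddCommGroup E] {h : α → E} (hδ : 0 ≤ δ)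
    (hw : Integrable (fun x => w x ^ 2) μ) (hh : ∀ x, ‖h x‖ ≤ δ * w x) :
    √(∫ x, ‖h x‖ ^ 2 ∂μ) ≤ δ * √(∫ x, w x ^ 2 ∂μ) := by
  have hle : ∫ x, ‖h x‖ ^ 2 ∂μ ≤ δ ^ 2 * ∫ x, w x ^ 2 ∂μ := by
    rw [← integral_const_mul]
    refine integral_mono_of_nonneg (Eventually.of_forall fun x => by positivity)
      (hw.const_mul _) (Eventually.of_forall fun x => ?_)
    calc ‖h x‖ ^ 2 ≤ (δ * w x) ^ 2 := pow_le_pow_left₀ (norm_nonneg _) (hh x) 2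
      _ = δ ^ 2 * w x ^ 2 := mul_pow _ _ _
  calc √(∫ x, ‖h x‖ ^ 2 ∂μ) ≤ √(δ ^ 2 * ∫ x, w x ^ 2 ∂μ) := Real.sqrt_le_sqrt hle
    _ = δ * √(∫ x, w x ^ 2 ∂μ) := by rw [Real.sqrt_mul' _ (integral_nonneg fun _ => sq_nonneg _),
      Real.sqrt_sq hδ]

lemma norm_integral_sq_sub_integral_sq_le {𝕜 : Type*} [RCLike 𝕜] {f g : α → 𝕜}
    (hf : AEStronglyMeasurable f μ) (hg : AEStronglyMeasurable g μ)
    (hw : Integrable (fun x => w x ^ 2) μ) (hfg : ∀ x, ‖f x - g x‖ ≤ δ * w x)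
    (hgw : ∀ x, ‖g x‖ ≤ w x) :
    ‖∫ x, f x ^ 2 ∂μ - ∫ x, g x ^ 2 ∂μ‖ ≤ δ * (δ + 2) * ∫ x, w x ^ 2 ∂μ := by
  have hsum : ∀ x, ‖f x + g x‖ ≤ (δ + 2) * w x := fun x =>
    calc ‖f x + g x‖ = ‖(f x - g x) + 2 * g x‖ := by ring_nf
      _ ≤ ‖f x - g x‖ + 2 * ‖g x‖ := by
        refine (norm_add_le _ _).trans_eq ?_
        rw [norm_mul, RCLike.norm_two]
      _ ≤ (δ + 2) * w x := by linarith [hfg x, hgw x]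
  have hsq : ∀ (u : α → 𝕜) (c : ℝ), AEStronglyMeasurable u μ → (∀ x, ‖u x‖ ≤ c * w x) →
      Integrable (fun x => u x ^ 2) μ := fun u c hu hle =>
    Integrable.mono' (hw.const_mul (c ^ 2)) (hu.pow 2) (Eventually.of_forall fun x => by
      rw [norm_pow, ← mul_pow]
      exact pow_le_pow_left₀ (norm_nonneg _) (hle x) 2)
  have hfi : Integrable (fun x => f x ^ 2) μ :=
    hsq f (δ + 1) hf fun x => by
      linarith [norm_le_norm_add_norm_sub' (f x) (g x), hfg x, hgw x, norm_sub_rev (f x) (g x)]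
  have hgi : Integrable (fun x => g x ^ 2) μ := hsq g 1 hg fun x => by simpa using hgw x
  rw [← integral_sub hfi hgi, ← integral_const_mul]
  refine (norm_integral_le_integral_norm _).trans <| integral_mono_of_nonneg
    (Eventually.of_forall fun x => norm_nonneg _) (hw.const_mul _)
    (Eventually.of_forall fun x => ?_)
  calc ‖f x ^ 2 - g x ^ 2‖ = ‖f x - g x‖ * ‖f x + g x‖ := by rw [← norm_mul]; ring_nf
    _ ≤ δ * w x * ((δ + 2) * w x) :=
      mul_le_mul (hfg x) (hsum x) (norm_nonneg _) ((norm_nonneg _).trans (hfg x))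
    _ = δ * (δ + 2) * w x ^ 2 := by ring

lemma exists_rate_of_eventually_norm_sub_le {𝕜 : Type*} [RCLike 𝕜] {f : ℝ → α → 𝕜} {g : α → 𝕜}
    {A : ℝ} (hf : ∀ ε, AEStronglyMeasurable (f ε) μ) (hg : AEStronglyMeasurable g μ)
    (hw : Integrable (fun x => w x ^ 2) μ) (hgw : ∀ x, ‖g x‖ ≤ w x) (hA : 0 ≤ A)
    (hfg : ∀ᶠ ε in 𝓝[>] 0, ∀ x, ‖f ε x - g x‖ ≤ A * ε * w x) {ε₀ : ℝ} (hε₀ : 0 < ε₀) :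
    ∃ ε₁, 0 < ε₁ ∧ ε₁ ≤ ε₀ ∧ ∃ C > (0 : ℝ), ∀ ε ∈ Ioo 0 ε₁,
      √(∫ x, ‖f ε x - g x‖ ^ 2 ∂μ) ≤ C * ε ∧
      ‖∫ x, f ε x ^ 2 ∂μ - ∫ x, g x ^ 2 ∂μ‖ ≤ C * ε := by
  set J := ∫ x, w x ^ 2 ∂μ
  have hJ : 0 ≤ J := integral_nonneg fun _ => sq_nonneg _
  obtain ⟨ε₁, hε₁, hε₁ε₀, hsmall⟩ :=
    exists_Ioo_of_eventually_nhdsGT (hfg.and (Ioo_mem_nhdsGT one_pos)) hε₀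
  refine ⟨ε₁, hε₁, hε₁ε₀, A * √J + A * (A + 2) * J + 1, by positivity, fun ε hε => ?_⟩
  obtain ⟨hfgε, hε0, hε1⟩ := hsmall ε hε
  constructor
  · calc √(∫ x, ‖f ε x - g x‖ ^ 2 ∂μ) ≤ A * ε * √J :=
          sqrt_integral_norm_sq_le (by positivity) hw hfgε
      _ ≤ (A * √J + A * (A + 2) * J + 1) * ε := by
          rw [mul_right_comm]
          gcongr
          linarith [mul_nonneg (mul_nonneg hA (by linarith : 0 ≤ A + 2)) hJ]
  · calc _ ≤ A * ε * (A * ε + 2) * J :=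
          norm_integral_sq_sub_integral_sq_le (hf ε) hg hw hfgε hgw
      _ ≤ A * ε * (A + 2) * J := by
          gcongr
          exact mul_le_of_le_one_right hA hε1.le
      _ = A * (A + 2) * J * ε := by ring
      _ ≤ (A * √J + A * (A + 2) * J + 1) * ε := by
          gcongr
          linarith [mul_nonneg hA (Real.sqrt_nonneg J)]

end Domination

lemma measurable_fTwo (αm : ℂ) (ε : ℝ) (k : ℂ) : Measurable (fTwo αm ε k) := by
  unfold fTwo
  refine Measurable.ite measurableSet_Iio (by fun_prop) (Measurable.ite measurableSet_Iic ?_ ?_) <;>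
    fun_prop

lemma fTwo_of_lt_neg (αm : ℂ) {ε : ℝ} (hε : 0 ≤ ε) (k : ℂ) {x : ℝ} (hx : x < -ε) :
    fTwo αm ε k x = cexp (-(k * |x|)) := by
  rw [fTwo, if_pos hx, abs_of_neg (by linarith)]
  push_cast; ring_nf

lemma norm_fTwo_sub_of_abs_le (αm : ℂ) {ε : ℝ} {k : ℂ} (hk : k ≠ 0) (hkε : 3 * ‖k‖ * ε ≤ 1)
    {x : ℝ} (hx : |x| ≤ ε) :
    ‖fTwo αm ε k x - cexp (-(k * |x|))‖ ≤ 4 * (‖αm‖ + ‖k‖) * ε := by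
  obtain ⟨hxl, hxr⟩ := abs_le.1 hx
  have hε : 0 ≤ ε := (abs_nonneg x).trans hx
  have hk0 : 0 < ‖k‖ := norm_pos_iff.2 hk
  have hsplit : fTwo αm ε k x - cexp (-(k * |x|)) =
      αm / (2 * k) * (cexp (k * x) - cexp (-2 * k * ε + -k * x)) +
        (cexp (k * x) - cexp (-(k * |x|))) := by
    rw [fTwo, if_neg (not_lt.2 hxl), if_pos hxr, Complex.exp_add]
    field_simp
    ring
  have hkx : ‖k * x‖ ≤ ‖k‖ * ε := by
    rw [norm_mul, Complex.norm_real, Real.norm_eq_abs]; gcongr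
  have hkax : ‖-(k * |x|)‖ ≤ ‖k‖ * ε := by
    rw [norm_neg, norm_mul, Complex.norm_real, Real.norm_eq_abs, abs_abs]; gcongr
  have hshift : ‖-2 * k * ε + -k * x‖ ≤ 3 * ‖k‖ * ε :=
    calc ‖-2 * k * ε + -k * x‖ ≤ ‖-2 * k * ε‖ + ‖-k * x‖ := norm_add_le _ _
      _ ≤ 2 * ‖k‖ * ε + ‖k‖ * ε := by
        gcongr
        · simp [Real.norm_of_nonneg hε]
        · rwa [neg_mul, norm_neg]
      _ = 3 * ‖k‖ * ε := by ring
  have hkε' : ‖k‖ * ε ≤ 1 := by nlinarith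
  have h1 : ‖cexp (k * x) - cexp (-2 * k * ε + -k * x)‖ ≤ 8 * ‖k‖ * ε :=
    (norm_cexp_sub_cexp_le (hkx.trans hkε') (hshift.trans hkε)).trans (by linarith)
  have h2 : ‖cexp (k * x) - cexp (-(k * |x|))‖ ≤ 4 * ‖k‖ * ε :=
    (norm_cexp_sub_cexp_le (hkx.trans hkε') (hkax.trans hkε')).trans (by linarith)
  calc ‖fTwo αm ε k x - cexp (-(k * |x|))‖
      ≤ ‖αm‖ / (2 * ‖k‖) * ‖cexp (k * x) - cexp (-2 * k * ε + -k * x)‖ +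
          ‖cexp (k * x) - cexp (-(k * |x|))‖ := by
        rw [hsplit]
        refine (norm_add_le _ _).trans_eq ?_
        simp
    _ ≤ ‖αm‖ / (2 * ‖k‖) * (8 * ‖k‖ * ε) + 4 * ‖k‖ * ε := by gcongr
    _ = 4 * (‖αm‖ + ‖k‖) * ε := by field_simp; ring

lemma norm_fTwo_sub_of_lt (αm : ℂ) {ε : ℝ} (hε : 0 ≤ ε) {k : ℂ} (hk : k ≠ 0)
    (hkε : 2 * ‖k‖ * ε ≤ 1) {x : ℝ} (hx : ε < x) :
    ‖fTwo αm ε k x - cexp (-(k * |x|))‖ ≤ 4 * (‖αm‖ + ‖k‖) * ε * rexp (-(k.re * x)) := by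
  have hk0 : 0 < ‖k‖ := norm_pos_iff.2 hk
  have hsplit : fTwo αm ε k x - cexp (-(k * |x|)) =
      ((cexp (2 * k * ε) - cexp 0) + αm / (2 * k) * (cexp (2 * k * ε) - cexp (-2 * k * ε))) *
        cexp (-(k * x)) := by
    rw [fTwo, if_neg (by linarith), if_neg (not_le.2 hx), abs_of_pos (hε.trans_lt hx),
      Complex.exp_zero]
    ring_nf
  have hn : ‖2 * k * ε‖ = 2 * ‖k‖ * ε := by simp [Real.norm_of_nonneg hε]
  have hn' : ‖-2 * k * ε‖ = 2 * ‖k‖ * ε := by simp [Real.norm_of_nonneg hε]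
  have h1 : ‖cexp (2 * k * ε) - cexp 0‖ ≤ 4 * ‖k‖ * ε :=
    (norm_cexp_sub_cexp_le (hn ▸ hkε) (by simp)).trans (by rw [hn, norm_zero]; linarith)
  have h2 : ‖cexp (2 * k * ε) - cexp (-2 * k * ε)‖ ≤ 8 * ‖k‖ * ε :=
    (norm_cexp_sub_cexp_le (hn ▸ hkε) (hn' ▸ hkε)).trans (by rw [hn, hn']; linarith)
  calc ‖fTwo αm ε k x - cexp (-(k * |x|))‖
      ≤ (‖cexp (2 * k * ε) - cexp 0‖ +
          ‖αm‖ / (2 * ‖k‖) * ‖cexp (2 * k * ε) - cexp (-2 * k * ε)‖) * rexp (-(k.re * x)) := by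
        rw [hsplit, norm_mul, Complex.norm_exp]
        gcongr
        · refine (norm_add_le _ _).trans_eq ?_
          simp
        · simp
    _ ≤ (4 * ‖k‖ * ε + ‖αm‖ / (2 * ‖k‖) * (8 * ‖k‖ * ε)) * rexp (-(k.re * x)) := by gcongr
    _ = 4 * (‖αm‖ + ‖k‖) * ε * rexp (-(k.re * x)) := by field_simp; ring

lemma norm_fTwo_sub_le (αm : ℂ) {ε a : ℝ} (hε : 0 ≤ ε) {k : ℂ} (hk : k ≠ 0)
    (hkε : 3 * ‖k‖ * ε ≤ 1) (ha : 0 ≤ a) (hak : a ≤ k.re) (haε : a * ε ≤ 1 / 2) (x : ℝ) :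
    ‖fTwo αm ε k x - cexp (-(k * |x|))‖ ≤ 8 * (‖αm‖ + ‖k‖) * ε * rexp (-(a * |x|)) := by
  have hB : 0 ≤ (‖αm‖ + ‖k‖) * ε := by positivity
  rcases lt_or_ge x (-ε) with hxl | hxl
  · rw [fTwo_of_lt_neg αm hε k hxl, sub_self, norm_zero]
    positivity
  rcases le_or_gt x ε with hxr | hxr
  · have hx : |x| ≤ ε := abs_le.2 ⟨hxl, hxr⟩
    have hw : 1 / 2 ≤ rexp (-(a * |x|)) := by
      nlinarith [Real.add_one_le_exp (-(a * |x|)), mul_le_mul_of_nonneg_left hx ha]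
    calc ‖fTwo αm ε k x - cexp (-(k * |x|))‖ ≤ 4 * (‖αm‖ + ‖k‖) * ε :=
          norm_fTwo_sub_of_abs_le αm hk hkε hx
      _ ≤ 8 * (‖αm‖ + ‖k‖) * ε * rexp (-(a * |x|)) := by nlinarith
  · have hx : |x| = x := abs_of_pos (hε.trans_lt hxr)
    calc ‖fTwo αm ε k x - cexp (-(k * |x|))‖ ≤ 4 * (‖αm‖ + ‖k‖) * ε * rexp (-(k.re * x)) :=
          norm_fTwo_sub_of_lt αm hε hk (by nlinarith [norm_nonneg k]) hxr
      _ ≤ 8 * (‖αm‖ + ‖k‖) * ε * rexp (-(a * |x|)) := by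
          rw [hx]
          gcongr
          · norm_num
          · linarith

lemma norm_fTwo_sub_cexp_le (αm : ℂ) {ε : ℝ} (hε : 0 ≤ ε) {k κ₀ : ℂ} (hσ : 0 < κ₀.re)
    (hk : ‖k - κ₀‖ ≤ κ₀.re / 2) (hkε : 3 * ‖k‖ * ε ≤ 1) (hσε : κ₀.re * ε ≤ 2) (x : ℝ) :
    ‖fTwo αm ε k x - cexp (-(κ₀ * |x|))‖ ≤
      (8 * (‖αm‖ + ‖k‖) * ε + 4 / κ₀.re * ‖k - κ₀‖) * rexp (-(κ₀.re / 4 * |x|)) := by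
  have hre := half_re_le_re_of_norm_sub_le hk
  have hk0 : k ≠ 0 := fun h => by simp only [h, Complex.zero_re] at hre; linarith
  have hdecay : ‖cexp (-(k * |x|)) - cexp (-(κ₀ * |x|))‖ ≤
      4 / κ₀.re * ‖k - κ₀‖ * rexp (-(κ₀.re / 4 * |x|)) :=
    calc ‖cexp (-(k * |x|)) - cexp (-(κ₀ * |x|))‖
        ≤ ‖k - κ₀‖ * |x| * rexp (-((κ₀.re - ‖k - κ₀‖) * |x|)) :=
          norm_cexp_neg_mul_sub_le k κ₀ (abs_nonneg x)
      _ ≤ ‖k - κ₀‖ * (|x| * rexp (-(2 * (κ₀.re / 4) * |x|))) := by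
          rw [mul_assoc]
          gcongr
          linarith
      _ ≤ ‖k - κ₀‖ * ((κ₀.re / 4)⁻¹ * rexp (-(κ₀.re / 4 * |x|))) :=
          mul_le_mul_of_nonneg_left (mul_exp_neg_two_mul_le (by linarith) _) (norm_nonneg _)
      _ = 4 / κ₀.re * ‖k - κ₀‖ * rexp (-(κ₀.re / 4 * |x|)) := by field_simp
  calc ‖fTwo αm ε k x - cexp (-(κ₀ * |x|))‖
      ≤ ‖fTwo αm ε k x - cexp (-(k * |x|))‖ + ‖cexp (-(k * |x|)) - cexp (-(κ₀ * |x|))‖ :=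
        norm_sub_le_norm_sub_add_norm_sub _ _ _
    _ ≤ 8 * (‖αm‖ + ‖k‖) * ε * rexp (-(κ₀.re / 4 * |x|)) +
          4 / κ₀.re * ‖k - κ₀‖ * rexp (-(κ₀.re / 4 * |x|)) :=
        add_le_add (norm_fTwo_sub_le αm hε hk0 hkε (by linarith) (by linarith) (by linarith) x)
          hdecay
    _ = _ := by ring

lemma norm_sub_le_of_mul_eq {αp αm k : ℂ} {ε : ℝ} (hε : 0 ≤ ε) (hk : k ≠ 0)
    (hkε : 4 * ‖k‖ * ε ≤ 1)
    (h : (αp + 2 * k) * (αm + 2 * k) = αp * αm * cexp (-4 * k * ε)) :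
    ‖k - -(αp + αm) / 2‖ ≤ 2 * ‖αp * αm‖ * ε := by
  have hkey : 4 * k * (k - -(αp + αm) / 2) = αp * αm * (cexp (-4 * k * ε) - 1) := by
    linear_combination h
  have hz : ‖-4 * k * (ε : ℂ)‖ = 4 * ‖k‖ * ε := by
    simp [Real.norm_of_nonneg hε]
  have hexp : ‖cexp (-4 * k * ε) - 1‖ ≤ 2 * (4 * ‖k‖ * ε) :=
    hz ▸ Complex.norm_exp_sub_one_le (hz ▸ hkε)
  have hk4 : 0 < 4 * ‖k‖ := by positivity
  have : 4 * ‖k‖ * ‖k - -(αp + αm) / 2‖ ≤ 4 * ‖k‖ * (2 * ‖αp * αm‖ * ε) := by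
    calc 4 * ‖k‖ * ‖k - -(αp + αm) / 2‖ = ‖αp * αm‖ * ‖cexp (-4 * k * ε) - 1‖ := by
          simpa [norm_mul] using congrArg norm hkey
      _ ≤ ‖αp * αm‖ * (2 * (4 * ‖k‖ * ε)) := by gcongr
      _ = 4 * ‖k‖ * (2 * ‖αp * αm‖ * ε) := by ring
  exact le_of_mul_le_mul_left this hk4

lemma eventually_norm_fTwo_sub_le {αp αm κ₀ : ℂ} (hκ₀ : κ₀ = -(αp + αm) / 2)
    (hσ : 0 < κ₀.re) {ε₀ : ℝ} (hε₀ : 0 < ε₀) {κ : ℝ → ℂ}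
    (heq : ∀ ε ∈ Ioo (0 : ℝ) ε₀,
      (αp + 2 * κ ε) * (αm + 2 * κ ε) = αp * αm * cexp (-4 * κ ε * ε))
    (hlim : Tendsto κ (𝓝[>] 0) (𝓝 κ₀)) :
    ∃ A, 0 ≤ A ∧ ∀ᶠ ε in 𝓝[>] 0, ∀ x : ℝ,
      ‖fTwo αm ε (κ ε) x - cexp (-(κ₀ * |x|))‖ ≤ A * ε * rexp (-(κ₀.re / 4 * |x|)) := by
  set R := ‖κ₀‖ + κ₀.re / 2 with hR
  have hσR : κ₀.re ≤ R := by linarith [Complex.re_le_norm κ₀]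
  refine ⟨8 * (‖αm‖ + R) + 4 / κ₀.re * (2 * ‖αp * αm‖), by positivity, ?_⟩
  have hnear : ∀ᶠ ε in 𝓝[>] 0, κ ε ∈ Metric.closedBall κ₀ (κ₀.re / 2) :=
    hlim.eventually (Metric.closedBall_mem_nhds κ₀ (by linarith))
  have hsmall : Ioo 0 (min ε₀ (4 * R)⁻¹) ∈ 𝓝[>] (0 : ℝ) :=
    Ioo_mem_nhdsGT (lt_min hε₀ (by positivity))
  filter_upwards [hnear, hsmall] with ε hk ⟨hε, hεlt⟩ x
  rw [Metric.mem_closedBall, dist_eq_norm] at hk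
  have hk0 : κ ε ≠ 0 := fun h => by
    linarith [half_re_le_re_of_norm_sub_le hk, congrArg Complex.re h, Complex.zero_re]
  have hkR : ‖κ ε‖ ≤ R := by linarith [norm_le_norm_add_norm_sub' (κ ε) κ₀]
  have hRε : 4 * R * ε ≤ 1 := by
    have h4R : 0 < 4 * R := by positivity
    have := mul_lt_mul_of_pos_left (hεlt.trans_le (min_le_right _ _)) h4R
    rw [mul_inv_cancel₀ h4R.ne'] at this
    exact this.le
  have hkε : ‖κ ε‖ * ε ≤ R * ε := by gcongr
  have hM := norm_sub_le_of_mul_eq hε.le hk0 (by linarith)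
    (heq ε ⟨hε, hεlt.trans_le (min_le_left _ _)⟩)
  rw [← hκ₀] at hM
  calc ‖fTwo αm ε (κ ε) x - cexp (-(κ₀ * |x|))‖
      ≤ (8 * (‖αm‖ + ‖κ ε‖) * ε + 4 / κ₀.re * ‖κ ε - κ₀‖) * rexp (-(κ₀.re / 4 * |x|)) :=
        norm_fTwo_sub_cexp_le αm hε.le hσ hk (by linarith)
          (by nlinarith [mul_le_mul_of_nonneg_right hσR hε.le]) x
    _ ≤ (8 * (‖αm‖ + R) * ε + 4 / κ₀.re * (2 * ‖αp * αm‖ * ε)) *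
          rexp (-(κ₀.re / 4 * |x|)) := by gcongr
    _ = (8 * (‖αm‖ + R) + 4 / κ₀.re * (2 * ‖αp * αm‖)) * ε * rexp (-(κ₀.re / 4 * |x|)) := by
        ring

theorem stmt_8 (αp αm : ℂ) (hα : (αp + αm).re < 0) (ε₀ : ℝ) (hε₀ : 0 < ε₀)
    (κ : ℝ → ℂ)
    (heq : ∀ ε ∈ Ioo (0 : ℝ) ε₀,
      (αp + 2 * κ ε) * (αm + 2 * κ ε) = αp * αm * Complex.exp (-4 * κ ε * ε))
    (hlim : Filter.Tendsto κ (nhdsWithin 0 (Ioi (0 : ℝ))) (nhds (-(αp + αm) / 2))) :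
    let f₀ : ℝ → ℂ := fun x => Complex.exp ((αp + αm) * (|x| : ℝ) / 2)
    ∃ ε₁ : ℝ, 0 < ε₁ ∧ ε₁ ≤ ε₀ ∧ ∃ C > (0 : ℝ), ∀ ε ∈ Ioo (0 : ℝ) ε₁,
      Real.sqrt (∫ x : ℝ, ‖fTwo αm ε (κ ε) x - f₀ x‖ ^ 2) ≤ C * ε ∧
      ‖(∫ x : ℝ, (fTwo αm ε (κ ε) x) ^ 2) - ∫ x : ℝ, (f₀ x) ^ 2‖ ≤ C * ε := by
  intro f₀
  set κ₀ : ℂ := -(αp + αm) / 2 with hκ₀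
  have hσ : 0 < κ₀.re := by
    simp only [κ₀, Complex.div_ofNat_re, Complex.neg_re]
    linarith
  have hf₀ : ∀ x : ℝ, f₀ x = cexp (-(κ₀ * |x|)) := fun x => by simp only [f₀, κ₀]; ring_nf
  have hf₀w : ∀ x, ‖f₀ x‖ ≤ rexp (-(κ₀.re / 4 * |x|)) := fun x => by
    rw [hf₀, Complex.norm_exp, Real.exp_le_exp]
    simp only [Complex.neg_re, Complex.mul_re, Complex.ofReal_re, Complex.ofReal_im]
    nlinarith [abs_nonneg x]
  obtain ⟨A, hA, hpt⟩ := eventually_norm_fTwo_sub_le hκ₀ hσ hε₀ heq hlim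
  exact exists_rate_of_eventually_norm_sub_le
    (fun ε => (measurable_fTwo αm ε (κ ε)).aestronglyMeasurable) (by simp only [f₀]; fun_prop)
    (integrable_exp_neg_mul_abs_sq (by positivity)) hf₀w hA
    (hpt.mono fun ε h x => hf₀ x ▸ h x) hε₀
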